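/- Let X₁, X₂ : ℝ³ → ℝ³ be smooth vector fields, let (q,u) be an admissible pair on [0,T] with an extremal lift λ, and suppose φ₁₂(t) ≠ 0 for all t ∈ [0,T]. Let τ < τ' be two switching times such that (τ, τ') is a bang arc and u₁ switches at τ. Then φ₁(τ') ≠ 0; consequently u₁ does not switch at τ', so the control that switches at τ' is u₂. Symmetrically, if u₂ switches at τ, then the control that switches at τ' is u₁: the switchings of u₁ and of u₂ alternate along a bang-bang extremal on which φ₁₂ never vanishes. -/

import Mathlib

open MeasureTheory Set
open scoped RealInnerProductSpace

noncomputable section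

/-- The state space `ℝ³`, with its Euclidean inner product. -/
abbrev E3 : Type := EuclideanSpace ℝ (Fin 3)

/-- Lie bracket of vector fields: `[X,Y] = DY·X − DX·Y`. -/
def lieBracketVF {E : Type*} [NormedAddCommGroup E] [NormedSpace ℝ E]
    (X Y : E → E) : E → E :=
  fun x => fderiv ℝ Y x (X x) - fderiv ℝ X x (Y x)

/-- `X₁₂ = [X₁, X₂]`. -/
def X12 (X₁ X₂ : E3 → E3) : E3 → E3 := lieBracketVF X₁ X₂

/-- `X₊₁₂ = [X₁ + X₂, X₁₂]`. -/
def Xp12 (X₁ X₂ : E3 → E3) : E3 → E3 :=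
  lieBracketVF (fun x => X₁ x + X₂ x) (X12 X₁ X₂)

/-- `X₋₁₂ = [X₁ − X₂, X₁₂]`. -/
def Xm12 (X₁ X₂ : E3 → E3) : E3 → E3 :=
  lieBracketVF (fun x => X₁ x - X₂ x) (X12 X₁ X₂)

/-- An admissible pair on `[0,T]`: a measurable control `u = (u₁,u₂)` with values in
`[−1,1]²` together with an absolutely continuous trajectory `q` (encoded by the
integral representation) satisfying `q' = u₁X₁(q) + u₂X₂(q)` a.e. on `[0,T]`. -/
def IsAdmissiblePair (X₁ X₂ : E3 → E3) (T : ℝ) (q : ℝ → E3) (u : ℝ → ℝ × ℝ) : Prop :=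
  0 ≤ T ∧ Measurable u ∧ (∀ t ∈ Icc (0:ℝ) T, |(u t).1| ≤ 1 ∧ |(u t).2| ≤ 1) ∧
    IntegrableOn (fun s => (u s).1 • X₁ (q s) + (u s).2 • X₂ (q s)) (Icc 0 T) ∧
    ∀ t ∈ Icc (0:ℝ) T,
      q t = q 0 + ∫ s in Icc (0:ℝ) t, ((u s).1 • X₁ (q s) + (u s).2 • X₂ (q s))

/-- A trajectory `q` on `[0,T]` is time-optimal if no admissible pair on a
shorter interval `[0,T'']` joins `q 0` to `q T`. -/
def IsTimeOptimal (X₁ X₂ : E3 → E3) (T : ℝ) (q : ℝ → E3) : Prop :=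
  ¬ ∃ (T'' : ℝ) (q' : ℝ → E3) (u' : ℝ → ℝ × ℝ),
      T'' < T ∧ IsAdmissiblePair X₁ X₂ T'' q' u' ∧ q' 0 = q 0 ∧ q' T'' = q T

/-- Right-hand side of the adjoint equation: `−(Dₓ(u₁X₁ + u₂X₂)(q t))ᵀ λ(t)`. -/
def adjVec (X₁ X₂ : E3 → E3) (u : ℝ → ℝ × ℝ) (q lam : ℝ → E3) (t : ℝ) : E3 :=
  -(ContinuousLinearMap.adjoint
      ((u t).1 • fderiv ℝ X₁ (q t) + (u t).2 • fderiv ℝ X₂ (q t)) (lam t))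

/-- An extremal lift of an admissible pair `(q,u)` on `[0,T]`: a nonvanishing
absolutely continuous solution of the adjoint equation satisfying the
maximality condition of the PMP a.e. -/
def IsExtremalLift (X₁ X₂ : E3 → E3) (T : ℝ) (q : ℝ → E3) (u : ℝ → ℝ × ℝ)
    (lam : ℝ → E3) : Prop :=
  (∀ t ∈ Icc (0:ℝ) T, lam t ≠ 0) ∧
    IntegrableOn (adjVec X₁ X₂ u q lam) (Icc 0 T) ∧
    (∀ t ∈ Icc (0:ℝ) T, lam t = lam 0 + ∫ s in Icc (0:ℝ) t, adjVec X₁ X₂ u q lam s) ∧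
    ∀ᵐ t ∂volume, t ∈ Icc (0:ℝ) T →
      (u t).1 * ⟪lam t, X₁ (q t)⟫ + (u t).2 * ⟪lam t, X₂ (q t)⟫ =
        |⟪lam t, X₁ (q t)⟫| + |⟪lam t, X₂ (q t)⟫|

/-- The switching function `t ↦ ⟨λ(t), X(q(t))⟩` associated with a vector field `X`. -/
def phiF (X : E3 → E3) (q lam : ℝ → E3) (t : ℝ) : ℝ := ⟪lam t, X (q t)⟫

/-- `(a,b)` is a bang arc: a maximal open subinterval of `[0,T]` on which both
`φ₁` and `φ₂` are nonvanishing. -/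
def IsBangArc (T : ℝ) (φ₁ φ₂ : ℝ → ℝ) (a b : ℝ) : Prop :=
  0 ≤ a ∧ a < b ∧ b ≤ T ∧ (∀ t ∈ Ioo a b, φ₁ t ≠ 0 ∧ φ₂ t ≠ 0) ∧
    ∀ a' b', 0 ≤ a' → a' ≤ a → b ≤ b' → b' ≤ T →
      (∀ t ∈ Ioo a' b', φ₁ t ≠ 0 ∧ φ₂ t ≠ 0) → a' = a ∧ b' = b

/-- `(a,b)` is a `u₁`-singular arc: a maximal open subinterval of `[0,T]` on which
`φ₁` vanishes identically and `φ₂` is nonvanishing. -/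
def IsU1SingularArc (T : ℝ) (φ₁ φ₂ : ℝ → ℝ) (a b : ℝ) : Prop :=
  0 ≤ a ∧ a < b ∧ b ≤ T ∧ (∀ t ∈ Ioo a b, φ₁ t = 0 ∧ φ₂ t ≠ 0) ∧
    ∀ a' b', 0 ≤ a' → a' ≤ a → b ≤ b' → b' ≤ T →
      (∀ t ∈ Ioo a' b', φ₁ t = 0 ∧ φ₂ t ≠ 0) → a' = a ∧ b' = b

/-- `(a,b)` is a `u₂`-singular arc. -/
def IsU2SingularArc (T : ℝ) (φ₁ φ₂ : ℝ → ℝ) (a b : ℝ) : Prop :=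
  0 ≤ a ∧ a < b ∧ b ≤ T ∧ (∀ t ∈ Ioo a b, φ₂ t = 0 ∧ φ₁ t ≠ 0) ∧
    ∀ a' b', 0 ≤ a' → a' ≤ a → b ≤ b' → b' ≤ T →
      (∀ t ∈ Ioo a' b', φ₂ t = 0 ∧ φ₁ t ≠ 0) → a' = a ∧ b' = b

/-- A singular arc is a `u₁`- or `u₂`-singular arc. -/
def IsSingularArc (T : ℝ) (φ₁ φ₂ : ℝ → ℝ) (a b : ℝ) : Prop :=
  IsU1SingularArc T φ₁ φ₂ a b ∨ IsU2SingularArc T φ₁ φ₂ a b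

/-- A switching time: a point of `(0,T)` separating two bang arcs. -/
def IsSwitchingTime (T : ℝ) (φ₁ φ₂ : ℝ → ℝ) (τ : ℝ) : Prop :=
  ∃ a b, IsBangArc T φ₁ φ₂ a τ ∧ IsBangArc T φ₁ φ₂ τ b

/-- The scalar control `ui` switches at the switching time `τ`: it is a.e. equal to
a constant of modulus 1 on a left neighborhood of `τ` and to the opposite constant
on a right neighborhood of `τ`. -/
def SwitchesAt (T : ℝ) (φ₁ φ₂ : ℝ → ℝ) (ui : ℝ → ℝ) (τ : ℝ) : Prop :=
  IsSwitchingTime T φ₁ φ₂ τ ∧ ∃ c : ℝ, |c| = 1 ∧ ∃ ε > 0,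
    (∀ᵐ t ∂volume, t ∈ Ioo (τ - ε) τ → ui t = c) ∧
    (∀ᵐ t ∂volume, t ∈ Ioo τ (τ + ε) → ui t = -c)

/-- The trajectory is bang-bang: `[0,T]` is the union of the closures of finitely
many bang arcs. -/
def IsBangBang (T : ℝ) (φ₁ φ₂ : ℝ → ℝ) : Prop :=
  ∃ (n : ℕ) (a b : Fin n → ℝ), (∀ i, IsBangArc T φ₁ φ₂ (a i) (b i)) ∧
    Icc (0:ℝ) T = ⋃ i, Icc (a i) (b i)

/-!
The adjoint equation turns the derivative of a switching function `⟨λ, Y(q)⟩` into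
`⟨λ, [u₁X₁ + u₂X₂, Y](q)⟩`, so that `φ₁' = -u₂ φ₁₂` and `φ₂' = u₁ φ₁₂` a.e.
If `u₁` switches at `τ`, the maximality condition `u₁ φ₁ = |φ₁|` forces `φ₁(τ) = 0`.
On the bang arc `(τ, τ')` the function `φ₂` keeps its sign, hence `u₂` is a.e. a constant
`σ = ±1` there, and `φ₁(τ') = -σ ∫_τ^τ' φ₁₂ ≠ 0` since `φ₁₂` keeps its sign as well.
A control cannot switch where its switching function does not vanish.
-/

open scoped NNReal

section Primitive

variable {E : Type*} [NormedAddCommGroup E] [NormedSpace ℝ E] {f g : ℝ → E} {T : ℝ}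

theorem continuousOn_of_eq_add_integral (hf : IntegrableOn f (Icc 0 T))
    (hg : ∀ t ∈ Icc (0:ℝ) T, g t = g 0 + ∫ s in Icc (0:ℝ) t, f s) :
    ContinuousOn g (Icc 0 T) :=
  (continuousOn_const.add (intervalIntegral.continuousOn_primitive_Icc hf)).congr hg

theorem exists_lipschitzOnWith_of_eq_add_integral {b : ℝ → ℝ} (hf : IntegrableOn f (Icc 0 T))
    (hg : ∀ t ∈ Icc (0:ℝ) T, g t = g 0 + ∫ s in Icc (0:ℝ) t, f s)
    (hb : ContinuousOn b (Icc 0 T)) (hfb : ∀ s ∈ Icc (0:ℝ) T, ‖f s‖ ≤ b s) :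
    ∃ K, LipschitzOnWith K g (Icc 0 T) := by
  obtain ⟨C, hC⟩ := isCompact_Icc.exists_bound_of_continuousOn hb
  have hfC : ∀ s ∈ Icc (0:ℝ) T, ‖f s‖ ≤ C.toNNReal := fun s hs =>
    ((hfb s hs).trans ((Real.le_norm_self _).trans (hC s hs))).trans (Real.le_coe_toNNReal C)
  refine ⟨C.toNNReal, LipschitzOnWith.of_dist_le_mul fun s hs t ht => ?_⟩
  have hint : ∀ r ∈ Icc (0:ℝ) T, IntervalIntegrable f volume 0 r := fun r hr =>
    (intervalIntegrable_iff_integrableOn_Icc_of_le hr.1).2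
      (hf.mono_set (Icc_subset_Icc le_rfl hr.2))
  have hsub : g s - g t = ∫ r in t..s, f r := by
    rw [hg s hs, hg t ht, add_sub_add_left_eq_sub, integral_Icc_eq_integral_Ioc,
      integral_Icc_eq_integral_Ioc, ← intervalIntegral.integral_of_le hs.1,
      ← intervalIntegral.integral_of_le ht.1,
      intervalIntegral.integral_interval_sub_left (hint s hs) (hint t ht)]
  rw [dist_eq_norm, hsub, Real.dist_eq]
  exact intervalIntegral.norm_integral_le_of_norm_le_const fun r hr =>
    hfC r (uIcc_subset_Icc ht hs (uIoc_subset_uIcc hr))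

theorem ae_hasDerivAt_of_eq_add_integral [CompleteSpace E] (hf : IntegrableOn f (Icc 0 T))
    (hg : ∀ t ∈ Icc (0:ℝ) T, g t = g 0 + ∫ s in Icc (0:ℝ) t, f s) :
    ∀ᵐ x, x ∈ Ioo 0 T → HasDerivAt g (f x) x := by
  rcases lt_or_ge T 0 with hT | hT
  · exact ae_of_all _ fun x hx => absurd (hx.1.trans hx.2) hT.not_gt
  have hfi : IntervalIntegrable f volume 0 T :=
    (intervalIntegrable_iff_integrableOn_Icc_of_le hT).2 hf
  filter_upwards [hfi.ae_hasDerivAt_integral] with x hx hxI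
  have hxI' : x ∈ uIcc 0 T := by rw [uIcc_of_le hT]; exact Ioo_subset_Icc_self hxI
  refine ((hx hxI' 0 left_mem_uIcc).const_add (g 0)).congr_of_eventuallyEq ?_
  filter_upwards [Ioo_mem_nhds hxI.1 hxI.2] with t ht
  rw [hg t (Ioo_subset_Icc_self ht), integral_Icc_eq_integral_Ioc,
    intervalIntegral.integral_of_le ht.1.le]

end Primitive

theorem IsPreconnected.forall_pos_or_forall_neg {α : Type*} [TopologicalSpace α] {s : Set α}
    {ψ : α → ℝ} (hs : IsPreconnected s) (hψc : ContinuousOn ψ s) (hψ : ∀ x ∈ s, ψ x ≠ 0) :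
    (∀ x ∈ s, 0 < ψ x) ∨ (∀ x ∈ s, ψ x < 0) := by
  rcases hs.eq_or_eq_neg_of_sq_eq hψc.abs hψc (fun x _ => sq_abs (ψ x)) (hψ _) with h | h
  · exact .inl fun x hx => h hx ▸ abs_pos.2 (hψ x hx)
  · refine .inr fun x hx => ?_
    have : |ψ x| = -ψ x := h hx
    linarith [abs_pos.2 (hψ x hx)]

theorem IsPreconnected.exists_ae_eq_of_mul_eq_abs {s : Set ℝ} {w ψ : ℝ → ℝ}
    (hs : IsPreconnected s) (hψc : ContinuousOn ψ s) (hψ : ∀ x ∈ s, ψ x ≠ 0)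
    (hw : ∀ᵐ x, x ∈ s → w x * ψ x = |ψ x|) :
    ∃ σ ≠ 0, ∀ᵐ x, x ∈ s → w x = σ := by
  obtain ⟨σ, hσ, hσψ⟩ : ∃ σ : ℝ, σ ≠ 0 ∧ ∀ x ∈ s, |ψ x| = σ * ψ x := by
    rcases hs.forall_pos_or_forall_neg hψc hψ with h | h
    · exact ⟨1, one_ne_zero, fun x hx => by rw [abs_of_pos (h x hx), one_mul]⟩
    · exact ⟨-1, by norm_num, fun x hx => by rw [abs_of_neg (h x hx), neg_one_mul]⟩
  exact ⟨σ, hσ, hw.mono fun x h hx => mul_right_cancel₀ (hψ x hx) ((h hx).trans (hσψ x hx))⟩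

theorem eq_of_ae_eq_of_ae_eq {α : Type*} {v : ℝ → α} {a b : ℝ} {c d : α} (hab : a < b)
    (hc : ∀ᵐ x, x ∈ Ioo a b → v x = c) (hd : ∀ᵐ x, x ∈ Ioo a b → v x = d) : c = d := by
  have : (ae (volume.restrict (Ioo a b))).NeBot := ae_neBot.2 (by simp [hab])
  obtain ⟨x, hxc, hxd⟩ := (((ae_restrict_iff' measurableSet_Ioo).2 hc).and
    ((ae_restrict_iff' measurableSet_Ioo).2 hd)).exists
  exact hxc.symm.trans hxd

theorem intervalIntegral_ne_zero_of_ne_zero {χ : ℝ → ℝ} {a b : ℝ} (hab : a < b)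
    (hχc : ContinuousOn χ (Icc a b)) (hχ : ∀ x ∈ Ioo a b, χ x ≠ 0) :
    ∫ x in a..b, χ x ≠ 0 := by
  have hint : IntervalIntegrable χ volume a b := hχc.intervalIntegrable_of_Icc hab.le
  rcases isPreconnected_Ioo.forall_pos_or_forall_neg (hχc.mono Ioo_subset_Icc_self) hχ
    with h | h
  · exact (intervalIntegral.intervalIntegral_pos_of_pos_on hint h hab).ne'
  · have := intervalIntegral.intervalIntegral_pos_of_pos_on hint.neg
      (fun x hx => neg_pos.2 (h x hx)) hab
    rw [Pi.neg_def, intervalIntegral.integral_neg] at this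
    exact (neg_pos.1 this).ne

theorem integral_eq_sub_of_lipschitzOnWith {φ g : ℝ → ℝ} {a b : ℝ} {K : ℝ≥0} (hab : a ≤ b)
    (hφ : LipschitzOnWith K φ (Icc a b)) (hderiv : ∀ᵐ x, x ∈ Ioo a b → HasDerivAt φ (g x) x) :
    ∫ x in a..b, g x = φ b - φ a := by
  rw [← uIcc_of_le hab] at hφ
  rw [← hφ.absolutelyContinuousOnInterval.integral_deriv_eq_sub]
  refine intervalIntegral.integral_congr_ae ?_
  filter_upwards [hderiv, volume.ae_ne b] with x hx hxb hxI
  rw [uIoc_of_le hab] at hxI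
  exact (hx ⟨hxI.1, hxI.2.lt_of_ne hxb⟩).deriv.symm

theorem apply_ne_zero_of_hasDerivAt_mul {φ w ψ χ : ℝ → ℝ} {a b : ℝ} {K : ℝ≥0} (hab : a < b)
    (hφ : LipschitzOnWith K φ (Icc a b)) (hφa : φ a = 0)
    (hderiv : ∀ᵐ x, x ∈ Ioo a b → HasDerivAt φ (w x * χ x) x)
    (hψc : ContinuousOn ψ (Ioo a b)) (hψ : ∀ x ∈ Ioo a b, ψ x ≠ 0)
    (hw : ∀ᵐ x, x ∈ Ioo a b → w x * ψ x = |ψ x|)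
    (hχc : ContinuousOn χ (Icc a b)) (hχ : ∀ x ∈ Ioo a b, χ x ≠ 0) :
    φ b ≠ 0 := by
  obtain ⟨σ, hσ, hwσ⟩ := isPreconnected_Ioo.exists_ae_eq_of_mul_eq_abs hψc hψ hw
  have hFTC : ∫ x in a..b, σ * χ x = φ b - φ a :=
    integral_eq_sub_of_lipschitzOnWith hab.le hφ <| by
      filter_upwards [hderiv, hwσ] with x hx hxσ hxI
      exact hxσ hxI ▸ hx hxI
  rw [hφa, sub_zero, intervalIntegral.integral_const_mul] at hFTC
  exact hFTC ▸ mul_ne_zero hσ (intervalIntegral_ne_zero_of_ne_zero hab hχc hχ)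

section Switching

variable {T τ : ℝ} {φ₁ φ₂ v : ℝ → ℝ}

theorem SwitchesAt.mem_Ioo (h : SwitchesAt T φ₁ φ₂ v τ) : τ ∈ Ioo 0 T := by
  obtain ⟨⟨a, b, hleft, hright⟩, -⟩ := h
  exact ⟨hleft.1.trans_lt hleft.2.1, hright.2.1.trans_le hright.2.2.1⟩

theorem SwitchesAt.apply_eq_zero {φ : ℝ → ℝ} (h : SwitchesAt T φ₁ φ₂ v τ)
    (hφ : ContinuousOn φ (Icc 0 T)) (hmax : ∀ᵐ t, t ∈ Icc 0 T → v t * φ t = |φ t|) :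
    φ τ = 0 := by
  obtain ⟨hτ0, hτT⟩ := h.mem_Ioo
  obtain ⟨-, c, hc, ε, hε, hleft, hright⟩ := h
  by_contra hne
  obtain ⟨δ, hδ, hball⟩ := Metric.mem_nhds_iff.1
    (((hφ.continuousAt (Icc_mem_nhds hτ0 hτT)).eventually_ne hne).and (Ioo_mem_nhds hτ0 hτT))
  rw [Real.ball_eq_Ioo] at hball
  obtain ⟨σ, -, hσ⟩ := isPreconnected_Ioo.exists_ae_eq_of_mul_eq_abs
    (hφ.mono fun x hx => Ioo_subset_Icc_self (hball hx).2) (fun x hx => (hball hx).1)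
    (hmax.mono fun x h hx => h (Ioo_subset_Icc_self (hball hx).2))
  set r := min δ ε
  have hr : 0 < r := lt_min hδ hε
  have hcσ : c = σ := eq_of_ae_eq_of_ae_eq (sub_lt_self τ hr)
    (hleft.mono fun x h hx => h ⟨by linarith [hx.1, min_le_right δ ε], hx.2⟩)
    (hσ.mono fun x h hx => h ⟨by linarith [hx.1, min_le_left δ ε], by linarith [hx.2]⟩)
  have hcσ' : -c = σ := eq_of_ae_eq_of_ae_eq (lt_add_of_pos_right τ hr)
    (hright.mono fun x h hx => h ⟨hx.1, by linarith [hx.2, min_le_right δ ε]⟩)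
    (hσ.mono fun x h hx => h ⟨by linarith [hx.1], by linarith [hx.2, min_le_left δ ε]⟩)
  have : c = 0 := by linarith
  simp [this] at hc

theorem SwitchesAt.apply_ne_zero_of_isBangArc {τ' : ℝ} {φ ψ χ w : ℝ → ℝ} {K : ℝ≥0}
    (h : SwitchesAt T φ₁ φ₂ v τ) (hbang : IsBangArc T φ₁ φ₂ τ τ')
    (hφ : LipschitzOnWith K φ (Icc 0 T)) (hmax : ∀ᵐ t, t ∈ Icc 0 T → v t * φ t = |φ t|)
    (hderiv : ∀ᵐ x, x ∈ Ioo 0 T → HasDerivAt φ (w x * χ x) x)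
    (hψc : ContinuousOn ψ (Icc 0 T)) (hψ : ∀ t ∈ Ioo τ τ', ψ t ≠ 0)
    (hw : ∀ᵐ t, t ∈ Icc 0 T → w t * ψ t = |ψ t|)
    (hχc : ContinuousOn χ (Icc 0 T)) (hχ : ∀ t ∈ Icc 0 T, χ t ≠ 0) :
    φ τ' ≠ 0 ∧ ¬ SwitchesAt T φ₁ φ₂ v τ' := by
  obtain ⟨hτ, hττ', hτ'⟩ : 0 ≤ τ ∧ τ < τ' ∧ τ' ≤ T := ⟨hbang.1, hbang.2.1, hbang.2.2.1⟩
  have hIcc : Icc τ τ' ⊆ Icc 0 T := Icc_subset_Icc hτ hτ'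
  have hIoo : Ioo τ τ' ⊆ Icc 0 T := Ioo_subset_Icc_self.trans hIcc
  have hne : φ τ' ≠ 0 := apply_ne_zero_of_hasDerivAt_mul hττ' (hφ.mono hIcc)
    (h.apply_eq_zero hφ.continuousOn hmax)
    (hderiv.mono fun x hx hxI => hx ⟨hτ.trans_lt hxI.1, hxI.2.trans_le hτ'⟩)
    (hψc.mono hIoo) hψ (hw.mono fun x hx hxI => hx (hIoo hxI))
    (hχc.mono hIcc) (fun x hx => hχ x (hIoo hx))
  exact ⟨hne, fun h' => hne (h'.apply_eq_zero hφ.continuousOn hmax)⟩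

end Switching

theorem ContDiff.exists_lipschitzOnWith_comp {E F : Type*} [NormedAddCommGroup E]
    [NormedSpace ℝ E] [ProperSpace E] [NormedAddCommGroup F] [NormedSpace ℝ F] {Φ : E → F}
    (hΦ : ContDiff ℝ 1 Φ) {γ : ℝ → E} {K : ℝ≥0} {s : Set ℝ} (hs : IsCompact s)
    (hγ : LipschitzOnWith K γ s) : ∃ K', LipschitzOnWith K' (Φ ∘ γ) s := by
  obtain ⟨R, hR⟩ := (hs.image_of_continuousOn hγ.continuousOn).isBounded.subset_closedBall 0
  obtain ⟨K', hK'⟩ := hΦ.contDiffOn.exists_lipschitzOnWith one_ne_zero (convex_closedBall 0 R)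
    (isCompact_closedBall 0 R)
  exact ⟨K' * K, hK'.comp hγ fun t ht => hR (mem_image_of_mem γ ht)⟩

theorem continuous_lieBracketVF {E : Type*} [NormedAddCommGroup E] [NormedSpace ℝ E]
    {X Y : E → E} (hX : ContDiff ℝ 1 X) (hY : ContDiff ℝ 1 Y) : Continuous (lieBracketVF X Y) :=
  ((hY.continuous_fderiv one_ne_zero).clm_apply hX.continuous).sub
    ((hX.continuous_fderiv one_ne_zero).clm_apply hY.continuous)

theorem hasDerivAt_inner_comp_of_hasDerivAt_adjoint {E : Type*} [NormedAddCommGroup E]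
    [InnerProductSpace ℝ E] [CompleteSpace E] {Y : E → E} {q lam : ℝ → E} {x : ℝ} {v : E}
    {A : E →L[ℝ] E} (hY : DifferentiableAt ℝ Y (q x)) (hq : HasDerivAt q v x)
    (hlam : HasDerivAt lam (-(ContinuousLinearMap.adjoint A) (lam x)) x) :
    HasDerivAt (fun t => ⟪lam t, Y (q t)⟫) ⟪lam x, fderiv ℝ Y (q x) v - A (Y (q x))⟫ x := by
  refine (hlam.inner ℝ (hY.hasFDerivAt.comp_hasDerivAt x hq)).congr_deriv ?_
  simp only [Function.comp_apply, inner_neg_left, ContinuousLinearMap.adjoint_inner_left,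
    inner_sub_right]
  ring

theorem norm_smul_add_smul_le {F : Type*} [SeminormedAddCommGroup F] [NormedSpace ℝ F]
    {a b : ℝ} (ha : |a| ≤ 1) (hb : |b| ≤ 1) (x y : F) : ‖a • x + b • y‖ ≤ ‖x‖ + ‖y‖ := by
  refine (norm_add_le _ _).trans (add_le_add ?_ ?_) <;>
    rw [norm_smul, Real.norm_eq_abs] <;> exact mul_le_of_le_one_left (norm_nonneg _) ‹_›

theorem mul_eq_abs_of_add_eq_abs_add_abs {a b x y : ℝ} (ha : |a| ≤ 1) (hb : |b| ≤ 1)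
    (h : a * x + b * y = |x| + |y|) : a * x = |x| ∧ b * y = |y| := by
  have hx : a * x ≤ |x| := (le_abs_self _).trans (by
    rw [abs_mul]; exact mul_le_of_le_one_left (abs_nonneg x) ha)
  have hy : b * y ≤ |y| := (le_abs_self _).trans (by
    rw [abs_mul]; exact mul_le_of_le_one_left (abs_nonneg y) hb)
  constructor <;> linarith

section ControlSystem

variable {X₁ X₂ : E3 → E3} {T : ℝ} {q lam : ℝ → E3} {u : ℝ → ℝ × ℝ}

theorem IsAdmissiblePair.exists_lipschitzOnWith (hX₁ : Continuous X₁) (hX₂ : Continuous X₂)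
    (hadm : IsAdmissiblePair X₁ X₂ T q u) : ∃ K, LipschitzOnWith K q (Icc 0 T) := by
  obtain ⟨-, -, hu, hint, hq⟩ := hadm
  have hqc := continuousOn_of_eq_add_integral hint hq
  exact exists_lipschitzOnWith_of_eq_add_integral hint hq
    ((hX₁.comp_continuousOn hqc).norm.add (hX₂.comp_continuousOn hqc).norm)
    fun s hs => norm_smul_add_smul_le (hu s hs).1 (hu s hs).2 _ _

theorem IsExtremalLift.exists_lipschitzOnWith (hX₁ : ContDiff ℝ 1 X₁) (hX₂ : ContDiff ℝ 1 X₂)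
    (hadm : IsAdmissiblePair X₁ X₂ T q u) (hlift : IsExtremalLift X₁ X₂ T q u lam)
    (hqc : ContinuousOn q (Icc 0 T)) : ∃ K, LipschitzOnWith K lam (Icc 0 T) := by
  obtain ⟨-, -, hu, -⟩ := hadm
  obtain ⟨-, hint, hlam, -⟩ := hlift
  have hlc := continuousOn_of_eq_add_integral hint hlam
  refine exists_lipschitzOnWith_of_eq_add_integral hint hlam
    ((((hX₁.continuous_fderiv one_ne_zero).comp_continuousOn hqc).norm.add
      ((hX₂.continuous_fderiv one_ne_zero).comp_continuousOn hqc).norm).mul hlc.norm)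
    fun s hs => ?_
  rw [adjVec, norm_neg]
  calc _ ≤ ‖ContinuousLinearMap.adjoint
          ((u s).1 • fderiv ℝ X₁ (q s) + (u s).2 • fderiv ℝ X₂ (q s))‖ * ‖lam s‖ :=
        ContinuousLinearMap.le_opNorm _ _
    _ = ‖(u s).1 • fderiv ℝ X₁ (q s) + (u s).2 • fderiv ℝ X₂ (q s)‖ * ‖lam s‖ := by
        rw [LinearIsometryEquiv.norm_map]
    _ ≤ _ := mul_le_mul_of_nonneg_right
        (norm_smul_add_smul_le (hu s hs).1 (hu s hs).2 _ _) (norm_nonneg _)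

theorem exists_lipschitzOnWith_phiF {Y : E3 → E3} {Kq Kl : ℝ≥0} (hY : ContDiff ℝ 1 Y)
    (hq : LipschitzOnWith Kq q (Icc 0 T)) (hlam : LipschitzOnWith Kl lam (Icc 0 T)) :
    ∃ K, LipschitzOnWith K (phiF Y q lam) (Icc 0 T) := by
  have hΦ : ContDiff ℝ 1 fun p : E3 × E3 => ⟪p.2, Y p.1⟫ :=
    contDiff_snd.inner ℝ (hY.comp contDiff_fst)
  exact hΦ.exists_lipschitzOnWith_comp (γ := fun t => (q t, lam t)) isCompact_Icc
    (hq.prodMk hlam)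

theorem ae_hasDerivAt_phiF (hX₁ : Differentiable ℝ X₁) (hX₂ : Differentiable ℝ X₂)
    (hadm : IsAdmissiblePair X₁ X₂ T q u) (hlift : IsExtremalLift X₁ X₂ T q u lam) :
    ∀ᵐ x, x ∈ Ioo 0 T →
      HasDerivAt (phiF X₁ q lam) ((u x).2 * -phiF (X12 X₁ X₂) q lam x) x ∧
      HasDerivAt (phiF X₂ q lam) ((u x).1 * phiF (X12 X₁ X₂) q lam x) x := by
  filter_upwards [ae_hasDerivAt_of_eq_add_integral hadm.2.2.2.1 hadm.2.2.2.2,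
    ae_hasDerivAt_of_eq_add_integral hlift.2.1 hlift.2.2.1] with x hq hlam hx
  refine ⟨(hasDerivAt_inner_comp_of_hasDerivAt_adjoint (hX₁ _) (hq hx) (hlam hx)).congr_deriv ?_,
    (hasDerivAt_inner_comp_of_hasDerivAt_adjoint (hX₂ _) (hq hx) (hlam hx)).congr_deriv ?_⟩ <;>
  · simp only [phiF, X12, lieBracketVF, map_add, map_smul, add_apply,
      smul_apply, inner_add_right, inner_sub_right, inner_smul_right]
    ring

theorem ae_mul_phiF_eq_abs (hadm : IsAdmissiblePair X₁ X₂ T q u)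
    (hlift : IsExtremalLift X₁ X₂ T q u lam) :
    ∀ᵐ t, t ∈ Icc 0 T →
      (u t).1 * phiF X₁ q lam t = |phiF X₁ q lam t| ∧
      (u t).2 * phiF X₂ q lam t = |phiF X₂ q lam t| :=
  hlift.2.2.2.mono fun t h ht =>
    mul_eq_abs_of_add_eq_abs_add_abs (hadm.2.2.1 t ht).1 (hadm.2.2.1 t ht).2 (h ht)

end ControlSystem

theorem statement_16_general (X₁ X₂ : E3 → E3) (hX₁ : ContDiff ℝ (⊤ : ℕ∞) X₁)
    (hX₂ : ContDiff ℝ (⊤ : ℕ∞) X₂) (T : ℝ) (q : ℝ → E3) (u : ℝ → ℝ × ℝ) (lam : ℝ → E3)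
    (hadm : IsAdmissiblePair X₁ X₂ T q u) (hlift : IsExtremalLift X₁ X₂ T q u lam)
    (h12 : ∀ t ∈ Icc (0:ℝ) T, phiF (X12 X₁ X₂) q lam t ≠ 0)
    (τ τ' : ℝ)
    (hbang : IsBangArc T (phiF X₁ q lam) (phiF X₂ q lam) τ τ') :
    (SwitchesAt T (phiF X₁ q lam) (phiF X₂ q lam) (fun t => (u t).1) τ →
      phiF X₁ q lam τ' ≠ 0 ∧
      ¬ SwitchesAt T (phiF X₁ q lam) (phiF X₂ q lam) (fun t => (u t).1) τ' ∧
      ((SwitchesAt T (phiF X₁ q lam) (phiF X₂ q lam) (fun t => (u t).1) τ' ∨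
          SwitchesAt T (phiF X₁ q lam) (phiF X₂ q lam) (fun t => (u t).2) τ') →
        SwitchesAt T (phiF X₁ q lam) (phiF X₂ q lam) (fun t => (u t).2) τ')) ∧
    (SwitchesAt T (phiF X₁ q lam) (phiF X₂ q lam) (fun t => (u t).2) τ →
      phiF X₂ q lam τ' ≠ 0 ∧
      ¬ SwitchesAt T (phiF X₁ q lam) (phiF X₂ q lam) (fun t => (u t).2) τ' ∧
      ((SwitchesAt T (phiF X₁ q lam) (phiF X₂ q lam) (fun t => (u t).1) τ' ∨
          SwitchesAt T (phiF X₁ q lam) (phiF X₂ q lam) (fun t => (u t).2) τ') →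
        SwitchesAt T (phiF X₁ q lam) (phiF X₂ q lam) (fun t => (u t).1) τ')) := by
  have hC₁ : ContDiff ℝ 1 X₁ := hX₁.of_le (by exact_mod_cast le_top)
  have hC₂ : ContDiff ℝ 1 X₂ := hX₂.of_le (by exact_mod_cast le_top)
  obtain ⟨Kq, hq⟩ := hadm.exists_lipschitzOnWith hC₁.continuous hC₂.continuous
  obtain ⟨Kl, hlam⟩ := hlift.exists_lipschitzOnWith hC₁ hC₂ hadm hq.continuousOn
  obtain ⟨K₁, hφ₁⟩ := exists_lipschitzOnWith_phiF hC₁ hq hlam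
  obtain ⟨K₂, hφ₂⟩ := exists_lipschitzOnWith_phiF hC₂ hq hlam
  have hφ₁₂ : ContinuousOn (phiF (X12 X₁ X₂) q lam) (Icc 0 T) :=
    hlam.continuousOn.inner ((continuous_lieBracketVF hC₁ hC₂).comp_continuousOn hq.continuousOn)
  have hderiv := ae_hasDerivAt_phiF (hC₁.differentiable one_ne_zero)
    (hC₂.differentiable one_ne_zero) hadm hlift
  have hmax := ae_mul_phiF_eq_abs hadm hlift
  refine ⟨fun hsw => ?_, fun hsw => ?_⟩
  · obtain ⟨hne, hnot⟩ := hsw.apply_ne_zero_of_isBangArc hbang hφ₁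
      (hmax.mono fun t h ht => (h ht).1) (hderiv.mono fun x h hx => (h hx).1)
      hφ₂.continuousOn (fun t ht => (hbang.2.2.2.1 t ht).2) (hmax.mono fun t h ht => (h ht).2)
      hφ₁₂.neg fun t ht => neg_ne_zero.2 (h12 t ht)
    exact ⟨hne, hnot, fun h => h.resolve_left hnot⟩
  · obtain ⟨hne, hnot⟩ := hsw.apply_ne_zero_of_isBangArc hbang hφ₂
      (hmax.mono fun t h ht => (h ht).2) (hderiv.mono fun x h hx => (h hx).2)
      hφ₁.continuousOn (fun t ht => (hbang.2.2.2.1 t ht).1) (hmax.mono fun t h ht => (h ht).1)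
      hφ₁₂ h12
    exact ⟨hne, hnot, fun h => h.resolve_right hnot⟩

/-- Along an extremal on which `φ₁₂` never vanishes, the switchings
of `u₁` and `u₂` alternate: if `τ < τ'` are switching times bounding a bang arc and
`u₁` switches at `τ`, then `φ₁(τ') ≠ 0`, so `u₁` does not switch at `τ'` and the
control that switches at `τ'` (if any) is `u₂`; and symmetrically. -/
theorem statement_16 (X₁ X₂ : E3 → E3) (hX₁ : ContDiff ℝ (⊤ : ℕ∞) X₁)
    (hX₂ : ContDiff ℝ (⊤ : ℕ∞) X₂) (T : ℝ) (q : ℝ → E3) (u : ℝ → ℝ × ℝ) (lam : ℝ → E3)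
    (hadm : IsAdmissiblePair X₁ X₂ T q u) (hlift : IsExtremalLift X₁ X₂ T q u lam)
    (h12 : ∀ t ∈ Icc (0:ℝ) T, phiF (X12 X₁ X₂) q lam t ≠ 0)
    (τ τ' : ℝ) (hlt : τ < τ')
    (hτsw : IsSwitchingTime T (phiF X₁ q lam) (phiF X₂ q lam) τ)
    (hτ'sw : IsSwitchingTime T (phiF X₁ q lam) (phiF X₂ q lam) τ')
    (hbang : IsBangArc T (phiF X₁ q lam) (phiF X₂ q lam) τ τ') :
    (SwitchesAt T (phiF X₁ q lam) (phiF X₂ q lam) (fun t => (u t).1) τ →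
      phiF X₁ q lam τ' ≠ 0 ∧
      ¬ SwitchesAt T (phiF X₁ q lam) (phiF X₂ q lam) (fun t => (u t).1) τ' ∧
      ((SwitchesAt T (phiF X₁ q lam) (phiF X₂ q lam) (fun t => (u t).1) τ' ∨
          SwitchesAt T (phiF X₁ q lam) (phiF X₂ q lam) (fun t => (u t).2) τ') →
        SwitchesAt T (phiF X₁ q lam) (phiF X₂ q lam) (fun t => (u t).2) τ')) ∧
    (SwitchesAt T (phiF X₁ q lam) (phiF X₂ q lam) (fun t => (u t).2) τ →
      phiF X₂ q lam τ' ≠ 0 ∧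
      ¬ SwitchesAt T (phiF X₁ q lam) (phiF X₂ q lam) (fun t => (u t).2) τ' ∧
      ((SwitchesAt T (phiF X₁ q lam) (phiF X₂ q lam) (fun t => (u t).1) τ' ∨
          SwitchesAt T (phiF X₁ q lam) (phiF X₂ q lam) (fun t => (u t).2) τ') →
        SwitchesAt T (phiF X₁ q lam) (phiF X₂ q lam) (fun t => (u t).1) τ')) :=
  statement_16_general X₁ X₂ hX₁ hX₂ T q u lam hadm hlift h12 τ τ' hbang

end
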